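/- Let P_ε(x,ξ) = Σ_{|β|≤m} a_β^ε(x)ξ^β be a family of symbols of order m on an open set U ⊆ ℝⁿ, write b_m^ε(x) = Σ_{|α|=m} |a_α^ε(x)|, and let Γ ⊆ ℝⁿ∖{0} be an open cone. Assume conditions (st_1) and (st_2) hold for every compact K ⊂ U, and additionally assume that for every compact L ⊂ U there exist p ∈ ℕ and ε₁ > 0 with inf_{x∈L} b_m^ε(x) ≥ ε^p for all 0 < ε < ε₁. Then condition (mh_1) holds with m₀ = m: for every compact K ⊂ U there exist q > 0, a slow-scale net (r_ε) and ε₀ > 0 such that |P_ε(x,ξ)| ≥ ε^q (1+|ξ|)^m for all (x,ξ) ∈ K×Γ with |ξ| ≥ r_ε and 0 < ε < ε₀. -/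

import Mathlib

open scoped BigOperators Classical
noncomputable section

abbrev Rn (n : ℕ) : Type := EuclideanSpace ℝ (Fin n)

/-- A net of positive reals (indexed by ε ∈ (0,1]) is of slow scale. -/
def SlowScale (r : ℝ → ℝ) : Prop :=
  (∀ ε ∈ Set.Ioc (0:ℝ) 1, 0 < r ε) ∧
  ∀ p : ℝ, 0 < p → ∃ C > (0:ℝ), ∃ ε₁ ∈ Set.Ioo (0:ℝ) 1,
    ∀ ε ∈ Set.Ioo (0:ℝ) ε₁, r ε ^ p ≤ C / ε

/-- Γ is a cone: stable under positive dilation. -/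
def IsCone {n : ℕ} (Γ : Set (Rn n)) : Prop :=
  ∀ ξ ∈ Γ, ∀ t : ℝ, 0 < t → t • ξ ∈ Γ

/-- first-order partial derivative in direction i -/
def pd1 {n : ℕ} (i : Fin n) (f : Rn n → ℂ) : Rn n → ℂ :=
  fun x => fderiv ℝ f x (EuclideanSpace.single i 1)

/-- multi-index partial derivative ∂^α -/
def pd {n : ℕ} (α : Fin n → ℕ) (f : Rn n → ℂ) : Rn n → ℂ :=
  (((List.finRange n).map fun i => (pd1 i)^[α i]).foldr (· ∘ ·) id) f

/-- |α| -/
def mdeg {n : ℕ} (α : Fin n → ℕ) : ℕ := ∑ i, α i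

/-- α! as a complex number -/
def mfactC {n : ℕ} (α : Fin n → ℕ) : ℂ := ((∏ i, Nat.factorial (α i) : ℕ) : ℂ)

/-- ξ^α -/
def mpow {n : ℕ} (ξ : Rn n) (α : Fin n → ℕ) : ℂ := ∏ i, ((ξ i : ℝ) : ℂ) ^ α i

/-- the finite set of multi-indices of length ≤ m -/
def midx (n m : ℕ) : Finset (Fin n → ℕ) :=
  (Finset.Icc (fun _ => 0) (fun _ => m)).filter fun σ => mdeg σ ≤ m

/-- ∂_x^α of a symbol P(x,ξ) -/
def pdx {n : ℕ} (α : Fin n → ℕ) (P : Rn n → Rn n → ℂ) : Rn n → Rn n → ℂ :=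
  fun x ξ => pd α (fun y => P y ξ) x

/-- ∂_ξ^β of a symbol P(x,ξ) -/
def pdxi {n : ℕ} (β : Fin n → ℕ) (P : Rn n → Rn n → ℂ) : Rn n → Rn n → ℂ :=
  fun x ξ => pd β (fun η => P x η) ξ

/-- ξ·x as a complex number -/
def edotC {n : ℕ} (ξ x : Rn n) : ℂ := ((∑ i, ξ i * x i : ℝ) : ℂ)

/-- the symbol P_ε(x,ξ) = Σ_{|σ|≤m} a_σ^ε(x) ξ^σ -/
def Psym {n : ℕ} (m : ℕ) (a : (Fin n → ℕ) → ℝ → Rn n → ℂ) (ε : ℝ) : Rn n → Rn n → ℂ :=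
  fun x ξ => ∑ σ ∈ midx n m, a σ ε x * mpow ξ σ

/-- the action P_ε(x,D)u = Σ_{|σ|≤m} a_σ^ε(x) D^σ u, D^σ = (-i)^{|σ|} ∂^σ -/
def PDOapply {n : ℕ} (m : ℕ) (a : (Fin n → ℕ) → ℝ → Rn n → ℂ) (ε : ℝ)
    (u : Rn n → ℂ) : Rn n → ℂ :=
  fun x => ∑ σ ∈ midx n m, a σ ε x * ((-Complex.I) ^ mdeg σ * pd σ u x)

/-- moderate net of smooth functions on Ω -/
def Moderate {n : ℕ} (Ω : Set (Rn n)) (u : ℝ → Rn n → ℂ) : Prop :=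
  (∀ ε ∈ Set.Ioc (0:ℝ) 1, ContDiffOn ℝ (⊤ : ℕ∞) (u ε) Ω) ∧
  ∀ K : Set (Rn n), IsCompact K → K ⊆ Ω → ∀ α : Fin n → ℕ,
    ∃ N : ℕ, ∃ C > (0:ℝ), ∃ ε₀ ∈ Set.Ioo (0:ℝ) 1,
      ∀ ε ∈ Set.Ioo (0:ℝ) ε₀, ∀ x ∈ K, ‖pd α (u ε) x‖ ≤ C / ε ^ N

/-- G^∞-regular net on Ω (ε-growth uniform in the derivative order) -/
def GInfReg {n : ℕ} (Ω : Set (Rn n)) (u : ℝ → Rn n → ℂ) : Prop :=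
  ∀ K : Set (Rn n), IsCompact K → K ⊆ Ω → ∃ N : ℕ, ∀ α : Fin n → ℕ,
    ∃ C > (0:ℝ), ∃ ε₀ ∈ Set.Ioo (0:ℝ) 1, ∀ ε ∈ Set.Ioo (0:ℝ) ε₀, ∀ x ∈ K,
      ‖pd α (u ε) x‖ ≤ C / ε ^ N

/-- rapidly decreasing of moderate type in the cone Γ -/
def RapDecMod {n : ℕ} (Γ : Set (Rn n)) (h : ℝ → Rn n → ℂ) : Prop :=
  ∃ M : ℕ, ∀ l : ℕ, ∃ C > (0:ℝ), ∃ ε₀ ∈ Set.Ioo (0:ℝ) 1, ∃ r : ℝ → ℝ, SlowScale r ∧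
    ∀ ε ∈ Set.Ioo (0:ℝ) ε₀, ∀ ξ ∈ Γ, r ε ≤ ‖ξ‖ →
      ‖h ε ξ‖ ≤ C / (ε ^ M * (1 + ‖ξ‖) ^ l)

/-- Fourier transform F(g)(ξ) = ∫ g(x) e^{-iξ·x} dx -/
def FT {n : ℕ} (g : Rn n → ℂ) (ξ : Rn n) : ℂ :=
  ∫ x : Rn n, g x * Complex.exp (-Complex.I * edotC ξ x)

/-- symbol of the transposed operator, via the expansion
    ᵗP(x,η) = Σ_{|σ|≤m} ((-1)^{|σ|}/σ!) (∂_ξ^σ ∂_x^σ P)(x,-η) -/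
def tsymb {n : ℕ} (m : ℕ) (P : Rn n → Rn n → ℂ) (x η : Rn n) : ℂ :=
  ∑ σ ∈ midx n m, ((-1 : ℂ) ^ mdeg σ / mfactC σ) * pdx σ (pdxi σ P) x (-η)

/-- coefficients r_β(x,ξ) of the operator R(ξ;x,D) from the algebraic lemma,
    for general symbols A and Q -/
def rGen {n : ℕ} (m : ℕ) (A Q : Rn n → Rn n → ℂ) (β : Fin n → ℕ) (x ξ : Rn n) : ℂ :=
  if β = (fun _ => 0) then
    (Q x (-ξ) - A x ξ) / A x ξ +
      ∑ γ ∈ (midx n m).filter (fun γ => 1 ≤ mdeg γ),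
        (mfactC γ)⁻¹ * pdxi γ (fun x' ξ' => Q x' (-ξ')) x ξ *
          ((-Complex.I) ^ mdeg γ * pdx γ (fun x' ξ' => (A x' ξ')⁻¹) x ξ)
  else
    ∑ γ ∈ midx n (m - mdeg β),
      (mfactC β * mfactC γ)⁻¹ *
        pdxi (fun i => β i + γ i) (fun x' ξ' => Q x' (-ξ')) x ξ *
          ((-Complex.I) ^ mdeg γ * pdx γ (fun x' ξ' => (A x' ξ')⁻¹) x ξ)

/-- the operator R(ξ;x,D)w = -Σ_{|β|≤m} r_β(x,ξ) D_x^β w -/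
def RopGen {n : ℕ} (m : ℕ) (A Q : Rn n → Rn n → ℂ) (ξ : Rn n) (w : Rn n → ℂ) : Rn n → ℂ :=
  fun x => -∑ β ∈ midx n m, rGen m A Q β x ξ * ((-Complex.I) ^ mdeg β * pd β w x)

/-- coefficients of R_ε with A = P_ε, Q = ᵗP_ε -/
def RcoefT {n : ℕ} (m : ℕ) (P : Rn n → Rn n → ℂ) : (Fin n → ℕ) → Rn n → Rn n → ℂ :=
  rGen m P (tsymb m P)

/-- the operator R_ε(ξ;x,D) with A = P_ε, Q = ᵗP_ε -/
def RopT {n : ℕ} (m : ℕ) (P : Rn n → Rn n → ℂ) (ξ : Rn n) : (Rn n → ℂ) → Rn n → ℂ :=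
  RopGen m P (tsymb m P) ξ

/-- condition (mh_1) with explicit exponent q -/
def MH1w {n : ℕ} (P : ℝ → Rn n → Rn n → ℂ) (K Γ : Set (Rn n)) (m₀ q : ℝ) : Prop :=
  ∃ r : ℝ → ℝ, SlowScale r ∧ ∃ ε₀ > (0:ℝ), ∀ ε ∈ Set.Ioo (0:ℝ) ε₀,
    ∀ x ∈ K, ∀ ξ ∈ Γ, r ε ≤ ‖ξ‖ → ε ^ q * (1 + ‖ξ‖) ^ m₀ ≤ ‖P ε x ξ‖

/-- condition (mh_1) -/
def MH1 {n : ℕ} (P : ℝ → Rn n → Rn n → ℂ) (K Γ : Set (Rn n)) (m₀ : ℝ) : Prop :=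
  ∃ q > (0:ℝ), MH1w P K Γ m₀ q

/-- condition (mh_2) -/
def MH2 {n : ℕ} (m : ℕ) (P : ℝ → Rn n → Rn n → ℂ) (K Γ : Set (Rn n)) (δ ρ : ℝ) : Prop :=
  ∀ α : Fin n → ℕ, ∃ s : ℝ → ℝ, SlowScale s ∧ ∃ r : ℝ → ℝ, SlowScale r ∧ ∃ ε₁ > (0:ℝ),
    ∀ β : Fin n → ℕ, mdeg β ≤ m → ∀ ε ∈ Set.Ioo (0:ℝ) ε₁, ∀ x ∈ K, ∀ ξ ∈ Γ, r ε ≤ ‖ξ‖ →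
      ‖pdx α (pdxi β (P ε)) x ξ‖ ≤
        s ε * ‖P ε x ξ‖ * (1 + ‖ξ‖) ^ (δ * (mdeg α : ℝ) - ρ * (mdeg β : ℝ))

/-- b_m^ε(x) = Σ_{|α|=m} |a_α^ε(x)| -/
def bprin {n : ℕ} (m : ℕ) (a : (Fin n → ℕ) → ℝ → Rn n → ℂ) (ε : ℝ) (x : Rn n) : ℝ :=
  ∑ σ ∈ (midx n m).filter (fun σ => mdeg σ = m), ‖a σ ε x‖

/-- principal symbol P_{ε,m}(x,ξ) = Σ_{|α|=m} a_α^ε(x) ξ^α -/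
def Pprin {n : ℕ} (m : ℕ) (a : (Fin n → ℕ) → ℝ → Rn n → ℂ) (ε : ℝ) (x ξ : Rn n) : ℂ :=
  ∑ σ ∈ (midx n m).filter (fun σ => mdeg σ = m), a σ ε x * mpow ξ σ

/-- condition (st_1) on K × Γ -/
def ST1 {n : ℕ} (m : ℕ) (a : (Fin n → ℕ) → ℝ → Rn n → ℂ) (K Γ : Set (Rn n)) : Prop :=
  ∃ s : ℝ → ℝ, SlowScale s ∧ ∃ r : ℝ → ℝ, SlowScale r ∧ ∃ ε₀ > (0:ℝ),
    ∀ ε ∈ Set.Ioo (0:ℝ) ε₀, ∀ x ∈ K, ∀ ξ ∈ Γ, r ε ≤ ‖ξ‖ →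
      (s ε)⁻¹ * bprin m a ε x * (1 + ‖ξ‖) ^ m ≤ ‖Pprin m a ε x ξ‖

/-- condition (st_2) on K -/
def ST2 {n : ℕ} (m : ℕ) (a : (Fin n → ℕ) → ℝ → Rn n → ℂ) (K : Set (Rn n)) : Prop :=
  ∀ γ : Fin n → ℕ, ∃ s : ℝ → ℝ, SlowScale s ∧ ∃ r : ℝ → ℝ, SlowScale r ∧ ∃ ε₁ > (0:ℝ),
    ∀ β ∈ midx n m, ∀ ε ∈ Set.Ioo (0:ℝ) ε₁, ∀ x ∈ K,
      ‖pd γ (a β ε) x‖ ≤ s ε * bprin m a ε x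

/-- slow-scale growth in each derivative on compact sets -/
def SlowScaleReg {n : ℕ} (Ω : Set (Rn n)) (u : ℝ → Rn n → ℂ) : Prop :=
  (∀ ε ∈ Set.Ioc (0:ℝ) 1, ContDiffOn ℝ (⊤ : ℕ∞) (u ε) Ω) ∧
  ∀ K : Set (Rn n), IsCompact K → K ⊆ Ω → ∀ α : Fin n → ℕ,
    ∃ s : ℝ → ℝ, SlowScale s ∧ ∃ ε₀ > (0:ℝ), ∀ ε ∈ Set.Ioo (0:ℝ) ε₀, ∀ x ∈ K,
      ‖pd α (u ε) x‖ ≤ s ε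

/-- first-order symbol Σ_j a_j^ε(x) ξ_j + a_0^ε(x) -/
def P1sym {n : ℕ} (aj : Fin n → ℝ → Rn n → ℂ) (a0 : ℝ → Rn n → ℂ) (ε : ℝ) :
    Rn n → Rn n → ℂ :=
  fun x ξ => (∑ j, aj j ε x * ((ξ j : ℝ) : ℂ)) + a0 ε x

/-- first-order operator action Σ_j a_j^ε(x) D_j u + a_0^ε(x) u -/
def P1apply {n : ℕ} (aj : Fin n → ℝ → Rn n → ℂ) (a0 : ℝ → Rn n → ℂ) (ε : ℝ)
    (u : Rn n → ℂ) : Rn n → ℂ :=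
  fun x => (∑ j, aj j ε x * (-Complex.I * pd1 j u x)) + a0 ε x * u x


lemma ss_const (c : ℝ) (hc : 0 < c) : SlowScale (fun _ => c) := by
  refine ⟨fun _ _ => hc, fun p hp => ⟨c ^ p, Real.rpow_pos_of_pos hc p, 1/2, by norm_num, ?_⟩⟩
  intro ε hε
  rw [le_div_iff₀ hε.1]
  nlinarith [Real.rpow_pos_of_pos hc p, hε.2]

lemma ss_max {r s : ℝ → ℝ} (hr : SlowScale r) (hs : SlowScale s) :
    SlowScale (fun ε => max (r ε) (s ε)) := by
  constructor
  · intro ε hε; exact lt_max_of_lt_left (hr.1 ε hε)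
  · intro p hp
    obtain ⟨C1, hC1, ε1, hε1, h1⟩ := hr.2 p hp
    obtain ⟨C2, hC2, ε2, hε2, h2⟩ := hs.2 p hp
    refine ⟨max C1 C2, lt_max_of_lt_left hC1, min ε1 ε2,
      ⟨lt_min hε1.1 hε2.1, lt_of_le_of_lt (min_le_left _ _) hε1.2⟩, ?_⟩
    intro ε hε
    have hεI1 : ε ∈ Set.Ioo (0:ℝ) ε1 := ⟨hε.1, lt_of_lt_of_le hε.2 (min_le_left _ _)⟩
    have hεI2 : ε ∈ Set.Ioo (0:ℝ) ε2 := ⟨hε.1, lt_of_lt_of_le hε.2 (min_le_right _ _)⟩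
    rcases max_cases (r ε) (s ε) with ⟨h, _⟩ | ⟨h, _⟩ <;> simp only [h]
    · exact le_trans (h1 ε hεI1) ((div_le_div_iff_of_pos_right hε.1).mpr (le_max_left _ _))
    · exact le_trans (h2 ε hεI2) ((div_le_div_iff_of_pos_right hε.1).mpr (le_max_right _ _))

lemma ss_mul {r s : ℝ → ℝ} (hr : SlowScale r) (hs : SlowScale s) :
    SlowScale (fun ε => r ε * s ε) := by
  constructor
  · intro ε hε; exact mul_pos (hr.1 ε hε) (hs.1 ε hε)
  · intro p hp
    obtain ⟨C1, hC1, ε1, hε1, h1⟩ := (ss_max hr hs).2 (2*p) (by linarith)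
    refine ⟨C1, hC1, ε1, hε1, fun ε hε => ?_⟩
    have hεI : ε ∈ Set.Ioc (0:ℝ) 1 := ⟨hε.1, le_of_lt (hε.2.trans hε1.2)⟩
    have hrp := hr.1 ε hεI
    have hsp := hs.1 ε hεI
    have hm : r ε * s ε ≤ (max (r ε) (s ε)) ^ (2:ℕ) := by
      rw [sq]
      exact mul_le_mul (le_max_left _ _) (le_max_right _ _) hsp.le
        (le_trans hrp.le (le_max_left _ _))
    calc (r ε * s ε) ^ p ≤ ((max (r ε) (s ε)) ^ (2:ℕ)) ^ p :=
          Real.rpow_le_rpow (mul_pos hrp hsp).le hm hp.le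
      _ = (max (r ε) (s ε)) ^ (2*p) := by
          rw [← Real.rpow_natCast (max (r ε) (s ε)) 2,
            ← Real.rpow_mul (le_trans hrp.le (le_max_left _ _))]
          norm_num
      _ ≤ C1 / ε := h1 ε hε

lemma coord_le_norm {n : ℕ} (ξ : Rn n) (i : Fin n) : |ξ i| ≤ ‖ξ‖ := by
  rw [EuclideanSpace.norm_eq]
  have h1 : |ξ i| = Real.sqrt (‖ξ i‖ ^ 2) := by
    rw [Real.norm_eq_abs, Real.sqrt_sq_eq_abs, abs_abs]
  rw [h1]
  apply Real.sqrt_le_sqrt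
  exact Finset.single_le_sum (fun j _ => sq_nonneg (‖ξ j‖)) (Finset.mem_univ i)

lemma pd_zero {n : ℕ} (f : Rn n → ℂ) : pd (fun _ => 0) f = f := by
  unfold pd
  have : ∀ l : List (Fin n), ((l.map fun i => (pd1 i)^[(0:ℕ)]).foldr (· ∘ ·) id) f = f := by
    intro l
    induction l with
    | nil => rfl
    | cons a t ih => simpa using ih
  exact this _

lemma norm_mpow_le {n : ℕ} (ξ : Rn n) (σ : Fin n → ℕ) :
    ‖mpow ξ σ‖ ≤ (1 + ‖ξ‖) ^ mdeg σ := by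
  unfold mpow mdeg
  rw [norm_prod, ← Finset.prod_pow_eq_pow_sum]
  apply Finset.prod_le_prod (fun i _ => norm_nonneg _)
  intro i _
  rw [norm_pow, Complex.norm_real, Real.norm_eq_abs]
  exact pow_le_pow_left₀ (abs_nonneg _)
    (le_trans (coord_le_norm ξ i) (by linarith [norm_nonneg ξ])) _


/-- Lemma 4.5 — (st_1), (st_2) and invertibility of
    Σ_{|α|=m}|a_α| imply (mh_1) with m₀ = m. -/
theorem stmt11 {n m : ℕ} (U Γ : Set (Rn n)) (hU : IsOpen U)
    (hΓo : IsOpen Γ) (hΓc : IsCone Γ) (hΓ0 : (0 : Rn n) ∉ Γ)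
    (a : (Fin n → ℕ) → ℝ → Rn n → ℂ)
    (hasm : ∀ σ ∈ midx n m, ∀ ε ∈ Set.Ioc (0:ℝ) 1, ContDiffOn ℝ (⊤ : ℕ∞) (a σ ε) U)
    (hst1 : ∀ K : Set (Rn n), IsCompact K → K ⊆ U → ST1 m a K Γ)
    (hst2 : ∀ K : Set (Rn n), IsCompact K → K ⊆ U → ST2 m a K)
    (hinv : ∀ L : Set (Rn n), IsCompact L → L ⊆ U → ∃ p : ℕ, ∃ ε₁ > (0:ℝ),
      ∀ ε ∈ Set.Ioo (0:ℝ) ε₁, ∀ x ∈ L, ε ^ p ≤ bprin m a ε x) :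
    ∀ K : Set (Rn n), IsCompact K → K ⊆ U →
      MH1 (fun ε => Psym m a ε) K Γ (m : ℝ) := by
  intro K hK hKU
  obtain ⟨s, hs, r, hr, ε₀, hε₀, hST1⟩ := hst1 K hK hKU
  obtain ⟨s', hs', r', hr', ε₁, hε₁, hST2⟩ := hst2 K hK hKU (fun _ => 0)
  obtain ⟨p, ε₂, hε₂, hInv⟩ := hinv K hK hKU
  obtain ⟨C, hC, ε₃, hε₃, hsC⟩ := hs.2 1 one_pos
  set N : ℕ := ((midx n m).filter (fun σ => ¬ mdeg σ = m)).card with hN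
  refine ⟨((p+2:ℕ):ℝ), by exact_mod_cast Nat.succ_pos (p+1),
    fun ε => max (r ε) (2 * ((N:ℝ)+1) * (s ε * s' ε)),
    ss_max hr (ss_mul (ss_const _ (by positivity)) (ss_mul hs hs')),
    min ε₀ (min ε₁ (min ε₂ (min ε₃ (min (1/(2*C)) 1)))),
    lt_min hε₀ (lt_min hε₁ (lt_min hε₂ (lt_min hε₃.1 (lt_min (by positivity) one_pos)))), ?_⟩
  intro ε hε x hx ξ hξ hrξ
  simp only [Set.mem_Ioo, lt_min_iff] at hε
  obtain ⟨hεpos, hεa, hεb, hεc, hεd, hεe, hεf⟩ := hε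
  have hεIoc : ε ∈ Set.Ioc (0:ℝ) 1 := ⟨hεpos, hεf.le⟩
  have hSpos : 0 < s ε := hs.1 ε hεIoc
  have hS'pos : 0 < s' ε := hs'.1 ε hεIoc
  have hb : ε ^ p ≤ bprin m a ε x := hInv ε ⟨hεpos, hεc⟩ x hx
  have hbpos : 0 < bprin m a ε x := lt_of_lt_of_le (pow_pos hεpos p) hb
  have hrle : r ε ≤ ‖ξ‖ := le_trans (le_max_left _ _) hrξ
  have hTle : 2 * ((N:ℝ)+1) * (s ε * s' ε) ≤ ‖ξ‖ := le_trans (le_max_right _ _) hrξ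
  have hA : (0:ℝ) < 1 + ‖ξ‖ := by positivity
  have hA1 : (1:ℝ) ≤ 1 + ‖ξ‖ := by linarith [norm_nonneg ξ]
  have hPrin : (s ε)⁻¹ * bprin m a ε x * (1 + ‖ξ‖) ^ m ≤ ‖Pprin m a ε x ξ‖ :=
    hST1 ε ⟨hεpos, hεa⟩ x hx ξ hξ hrle
  have hQterm : ∀ σ ∈ (midx n m).filter (fun σ => ¬ mdeg σ = m),
      ‖a σ ε x * mpow ξ σ‖ ≤ s' ε * bprin m a ε x * (1 + ‖ξ‖) ^ (m - 1) := by
    intro σ hσ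
    rw [norm_mul]
    obtain ⟨hmem, hne⟩ := Finset.mem_filter.mp hσ
    have h1 : ‖a σ ε x‖ ≤ s' ε * bprin m a ε x := by
      have h := hST2 σ hmem ε ⟨hεpos, hεb⟩ x hx
      rwa [pd_zero] at h
    have hdle : mdeg σ ≤ m := (Finset.mem_filter.mp hmem).2
    have h2 : ‖mpow ξ σ‖ ≤ (1 + ‖ξ‖) ^ (m - 1) := by
      refine le_trans (norm_mpow_le ξ σ) (pow_le_pow_right₀ hA1 ?_)
      omega
    exact mul_le_mul h1 h2 (norm_nonneg _) (mul_nonneg hS'pos.le hbpos.le)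
  have hQ : ‖∑ σ ∈ (midx n m).filter (fun σ => ¬ mdeg σ = m), a σ ε x * mpow ξ σ‖
      ≤ (N:ℝ) * (s' ε * bprin m a ε x * (1 + ‖ξ‖) ^ (m - 1)) := by
    refine le_trans (norm_sum_le _ _) ?_
    have h := Finset.sum_le_card_nsmul _ _ _ hQterm
    rwa [nsmul_eq_mul, ← hN] at h
  have hhalf : (N:ℝ) * (s' ε * bprin m a ε x * (1 + ‖ξ‖) ^ (m - 1))
      ≤ 1/2 * ((s ε)⁻¹ * bprin m a ε x * (1 + ‖ξ‖) ^ m) := by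
    have hinv0 : (0:ℝ) ≤ (s ε)⁻¹ := inv_nonneg.mpr hSpos.le
    rcases Nat.eq_zero_or_pos m with hm | hm
    · have hNz : N = 0 := by
        rw [hN, Finset.card_eq_zero]
        apply Finset.filter_false_of_mem
        intro σ hσ
        have hd : mdeg σ ≤ m := (Finset.mem_filter.mp hσ).2
        omega
      rw [hNz]
      push_cast
      rw [zero_mul]
      exact mul_nonneg (by norm_num)
        (mul_nonneg (mul_nonneg hinv0 hbpos.le) (pow_nonneg hA.le m))
    · have hsne : s ε ≠ 0 := hSpos.ne'
      have h2N : 2 * (N:ℝ) * (s ε * s' ε) ≤ 1 + ‖ξ‖ := by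
        nlinarith [mul_pos hSpos hS'pos, norm_nonneg ξ, hTle]
      have key : (N:ℝ) * s' ε ≤ 1/2 * ((s ε)⁻¹ * (1 + ‖ξ‖)) := by
        have heq : (N:ℝ) * s' ε = 1/2 * ((s ε)⁻¹ * (2 * (N:ℝ) * (s ε * s' ε))) := by
          field_simp
        rw [heq]
        linarith [mul_le_mul_of_nonneg_left h2N hinv0]
      have hm1 : m - 1 + 1 = m := by omega
      calc (N:ℝ) * (s' ε * bprin m a ε x * (1 + ‖ξ‖) ^ (m - 1))
          = ((N:ℝ) * s' ε) * (bprin m a ε x * (1 + ‖ξ‖) ^ (m - 1)) := by ring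
        _ ≤ (1/2 * ((s ε)⁻¹ * (1 + ‖ξ‖))) * (bprin m a ε x * (1 + ‖ξ‖) ^ (m - 1)) :=
            mul_le_mul_of_nonneg_right key
              (mul_nonneg hbpos.le (pow_nonneg hA.le _))
        _ = 1/2 * ((s ε)⁻¹ * bprin m a ε x * ((1 + ‖ξ‖) ^ (m - 1) * (1 + ‖ξ‖))) := by ring
        _ = 1/2 * ((s ε)⁻¹ * bprin m a ε x * (1 + ‖ξ‖) ^ m) := by
            rw [← pow_succ, hm1]
  have hsplit : Pprin m a ε x ξ = Psym m a ε x ξ -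
      ∑ σ ∈ (midx n m).filter (fun σ => ¬ mdeg σ = m), a σ ε x * mpow ξ σ := by
    have h := Finset.sum_filter_add_sum_filter_not (midx n m) (fun σ => mdeg σ = m)
      (fun σ => a σ ε x * mpow ξ σ)
    unfold Pprin Psym
    exact eq_sub_of_add_eq h
  have hPP : ‖Pprin m a ε x ξ‖ ≤ ‖Psym m a ε x ξ‖ +
      ‖∑ σ ∈ (midx n m).filter (fun σ => ¬ mdeg σ = m), a σ ε x * mpow ξ σ‖ := by
    rw [hsplit]; exact norm_sub_le _ _
  have hmain : 1/2 * ((s ε)⁻¹ * bprin m a ε x * (1 + ‖ξ‖) ^ m) ≤ ‖Psym m a ε x ξ‖ := by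
    have hQh := le_trans hQ hhalf
    linarith
  have hsinv : ε / C ≤ (s ε)⁻¹ := by
    have hsle : s ε ≤ C / ε := by
      have h := hsC ε ⟨hεpos, hεd⟩
      rwa [Real.rpow_one] at h
    have h := inv_anti₀ hSpos hsle
    rwa [inv_div] at h
  show ε ^ ((p+2:ℕ):ℝ) * (1 + ‖ξ‖) ^ ((m:ℕ):ℝ) ≤ ‖Psym m a ε x ξ‖
  rw [Real.rpow_natCast, Real.rpow_natCast]
  calc ε ^ (p+2) * (1 + ‖ξ‖) ^ m = (ε * (ε * ε ^ p)) * (1 + ‖ξ‖) ^ m := by ring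
    _ ≤ ((1/(2*C)) * (ε * ε ^ p)) * (1 + ‖ξ‖) ^ m := by
        apply mul_le_mul_of_nonneg_right _ (pow_nonneg hA.le m)
        exact mul_le_mul_of_nonneg_right hεe.le (by positivity)
    _ = 1/2 * ((ε / C) * ε ^ p) * (1 + ‖ξ‖) ^ m := by
        field_simp
    _ ≤ 1/2 * ((s ε)⁻¹ * bprin m a ε x) * (1 + ‖ξ‖) ^ m := by
        apply mul_le_mul_of_nonneg_right _ (pow_nonneg hA.le m)
        apply mul_le_mul_of_nonneg_left _ (by norm_num)
        exact mul_le_mul hsinv hb (pow_nonneg hεpos.le p) (inv_nonneg.mpr hSpos.le)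
    _ = 1/2 * ((s ε)⁻¹ * bprin m a ε x * (1 + ‖ξ‖) ^ m) := by ring
    _ ≤ ‖Psym m a ε x ξ‖ := hmain


end
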